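/- Let X be a subshift over an arbitrary alphabet, and suppose x = αβ^∞ ∈ X for some finite word α and nonempty finite word β. If {x} ∈ U, then there exist n ≥ 1 and words γ₁, …, γ_n ∈ L_X such that F_{γ₁} ∩ ⋯ ∩ F_{γ_n} = {β^∞}; in particular, X does not satisfy condition (L). -/

import Mathlib

namespace SubshiftPaper

variable {A : Type*}

/-- The initial word of length `n` of a sequence. -/
def word (x : ℕ → A) (n : ℕ) : List A := List.ofFn (fun i : Fin n => x i)

/-- Concatenation of a finite word with an infinite sequence. -/
def cat (α : List A) (x : ℕ → A) : ℕ → A := fun n =>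
  if h : n < α.length then α.get ⟨n, h⟩ else x (n - α.length)

/-- The shift map on infinite sequences. -/
def shiftSeq (x : ℕ → A) : ℕ → A := fun n => x (n + 1)

/-- `X` is a subshift: the set of sequences avoiding a set `F` of forbidden nonempty
finite words. -/
def IsSubshift (X : Set (ℕ → A)) : Prop :=
  ∃ F : Set (List A), (∀ w ∈ F, w ≠ []) ∧
    X = {x : ℕ → A | ∀ n k : ℕ, word (fun i => x (n + i)) k ∉ F}

/-- The language of `X`: all finite initial blocks of elements of `X` (and their
subblocks appear by shifting; for subshifts initial blocks suffice). -/
def language (X : Set (ℕ → A)) : Set (List A) :=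
  {α | ∃ x ∈ X, word x α.length = α}

open Classical in
/-- The product metric `d(x,y) = 2^{-min{n : xₙ ≠ yₙ}}`. -/
noncomputable def prodDist (x y : ℕ → A) : ℝ :=
  if h : x = y then 0 else (2 : ℝ)⁻¹ ^ Nat.find (Function.ne_iff.mp h)

/-- The cylinder set `Z_α = {x ∈ X : x starts with α}`. -/
def cylinder (X : Set (ℕ → A)) (α : List A) : Set (ℕ → A) :=
  {x ∈ X | word x α.length = α}

/-- The set `C(α,β) = {βx : βx ∈ X and αx ∈ X}`. -/
def Cab (X : Set (ℕ → A)) (α β : List A) : Set (ℕ → A) :=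
  {y | ∃ x : ℕ → A, y = cat β x ∧ cat β x ∈ X ∧ cat α x ∈ X}

/-- The follower set `F_α = {x ∈ X : αx ∈ X}`. -/
def follower (X : Set (ℕ → A)) (α : List A) : Set (ℕ → A) :=
  {x ∈ X | cat α x ∈ X}

/-- The Boolean algebra `U` of subsets of `X` generated by the sets `C(α,β)`: the smallest
collection of subsets containing all `C(α,β)` and `X` and closed under finite unions, finite
intersections and complements in `X`. -/
def BA (X : Set (ℕ → A)) : Set (Set (ℕ → A)) :=
  ⋂₀ {C : Set (Set (ℕ → A)) | X ∈ C ∧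
    (∀ α ∈ language X, ∀ β ∈ language X, Cab X α β ∈ C) ∧
    (∀ S ∈ C, ∀ T ∈ C, S ∪ T ∈ C) ∧
    (∀ S ∈ C, ∀ T ∈ C, S ∩ T ∈ C) ∧
    (∀ S ∈ C, X \ S ∈ C)}

/-- The periodic sequence `γ^∞ = γγγ⋯`. -/
def per (γ : List A) (h : γ ≠ []) : ℕ → A :=
  fun n => γ.get ⟨n % γ.length, Nat.mod_lt n (List.length_pos_of_ne_nil h)⟩

/-- A point is eventually periodic if it has the form `αγ^∞`. -/
def EventuallyPeriodic (x : ℕ → A) : Prop :=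
  ∃ (α γ : List A) (h : γ ≠ []), x = cat α (per γ h)

/-- Condition (L): for every finite `P ⊆ L_X` and every nonempty `γ ∈ L_X` with
`γ^∞ ∈ F_P := ⋂_{α ∈ P} F_α`, the set `F_P` contains an element other than `γ^∞`. -/
def ConditionL (X : Set (ℕ → A)) : Prop :=
  ∀ P : Finset (List A), ↑P ⊆ language X →
    ∀ γ ∈ language X, ∀ h : γ ≠ [],
      per γ h ∈ X ∩ ⋂ α ∈ P, follower X α →
        ∃ z ∈ X ∩ ⋂ α ∈ P, follower X α, z ≠ per γ h


/-!
Every set of the Boolean algebra `U` containing `x` contains a whole "cell" around `x`: the set of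
`y ∈ X` lying in finitely many prescribed `C(a,b)` and outside finitely many others. If `{x} ∈ U`,
such a cell is `{x}` itself. Cutting `x` at a late position `k`, membership of `(x₀⋯x_{k-1})z` in
a `C(a,b)` with `x ∈ C(a,b)` is the condition `a (x_{|b|}⋯x_{k-1}) z ∈ X`, i.e. `z ∈ F_δ` for a
single word `δ`; and since the complement of a subshift is open, membership in the `C(a,b)` that
avoid `x` is excluded for every `z` once `k` is large. So finitely many follower sets cut out
exactly the tail `σᵏx`, which for `x = αγ^∞` and `k ≡ |α| mod |γ|` is `γ^∞`, contradicting (L).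
-/

def dropSeq (k : ℕ) (x : ℕ → A) : ℕ → A := fun i => x (k + i)

@[simp]
lemma dropSeq_apply (k : ℕ) (x : ℕ → A) (i : ℕ) : dropSeq k x i = x (k + i) := rfl

section Words

@[simp]
lemma length_word (x : ℕ → A) (n : ℕ) : (word x n).length = n := by
  simp [word]

lemma word_eq_word_iff {x y : ℕ → A} {n : ℕ} : word x n = word y n ↔ ∀ i < n, x i = y i := by
  simp [word, List.ofFn_inj, funext_iff, Fin.forall_iff]

lemma word_add (x : ℕ → A) (m n : ℕ) : word x (m + n) = word x m ++ word (dropSeq m x) n := by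
  simp [word, List.ofFn_add]

lemma cat_apply_of_lt (a : List A) (x : ℕ → A) {n : ℕ} (h : n < a.length) : cat a x n = a[n] := by
  simp [cat, h]

lemma cat_apply_of_le (a : List A) (x : ℕ → A) {n : ℕ} (h : a.length ≤ n) :
    cat a x n = x (n - a.length) := by
  simp [cat, Nat.not_lt.mpr h]

lemma dropSeq_cat (a : List A) (x : ℕ → A) : dropSeq a.length (cat a x) = x := by
  funext n
  simp [cat_apply_of_le]

lemma word_cat (a : List A) (y : ℕ → A) : word (cat a y) a.length = a := by
  apply List.ext_getElem (length_word _ _)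
  intro i hi _
  simp [word, cat_apply_of_lt _ _ (by simpa using hi)]

lemma word_cat_add (a : List A) (y : ℕ → A) (n : ℕ) :
    word (cat a y) (a.length + n) = a ++ word y n := by
  rw [word_add, word_cat, dropSeq_cat]

lemma cat_append (a b : List A) (z : ℕ → A) : cat (a ++ b) z = cat a (cat b z) := by
  funext n
  rcases lt_or_ge n a.length with ha | ha
  · rw [cat_apply_of_lt _ _ (by simp; omega), cat_apply_of_lt _ _ ha,
      List.getElem_append_left ha]
  · rcases lt_or_ge n (a.length + b.length) with hb | hb
    · rw [cat_apply_of_lt _ _ (by simp; omega), cat_apply_of_le _ _ ha,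
        cat_apply_of_lt _ _ (by omega), List.getElem_append_right ha]
    · rw [cat_apply_of_le _ _ (by simp; omega), cat_apply_of_le _ _ ha,
        cat_apply_of_le _ _ (by omega), List.length_append, Nat.sub_add_eq]

lemma cat_word_apply_of_lt (x z : ℕ → A) {k i : ℕ} (h : i < k) : cat (word x k) z i = x i := by
  simp [cat, h, word]

lemma word_cat_word_of_le (x z : ℕ → A) {k n : ℕ} (h : n ≤ k) :
    word (cat (word x k) z) n = word x n :=
  word_eq_word_iff.2 fun _ hi => cat_word_apply_of_lt x z (hi.trans_le h)

lemma cat_word_dropSeq (x : ℕ → A) (k : ℕ) : cat (word x k) (dropSeq k x) = x := by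
  funext n
  by_cases h : n < k
  · exact cat_word_apply_of_lt x _ h
  · rw [cat_apply_of_le _ _ (by simpa using h), length_word, dropSeq_apply]
    congr 1
    omega

lemma dropSeq_cat_word (x z : ℕ → A) {b k : ℕ} (h : b ≤ k) :
    dropSeq b (cat (word x k) z) = cat (word (dropSeq b x) (k - b)) z := by
  obtain ⟨n, rfl⟩ := Nat.exists_eq_add_of_le h
  simpa [word_add, cat_append] using dropSeq_cat (word x b) (cat (word (dropSeq b x) n) z)

lemma word_per (γ : List A) (hγ : γ ≠ []) : word (per γ hγ) γ.length = γ := by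
  apply List.ext_getElem (length_word _ _)
  intro i hi _
  simp [word, per, Nat.mod_eq_of_lt (by simpa using hi : i < γ.length)]

lemma dropSeq_cat_per (α γ : List A) (hγ : γ ≠ []) (m : ℕ) :
    dropSeq (α.length + m * γ.length) (cat α (per γ hγ)) = per γ hγ := by
  funext n
  have h := congrFun (dropSeq_cat α (per γ hγ)) (m * γ.length + n)
  simp only [dropSeq_apply] at h ⊢
  rw [add_assoc, h]
  simp [per, Nat.mul_add_mod_self_right]

end Words

section Subshift

variable {X : Set (ℕ → A)}

lemma IsSubshift.dropSeq_mem (hX : IsSubshift X) {x : ℕ → A} (hx : x ∈ X) (k : ℕ) :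
    dropSeq k x ∈ X := by
  obtain ⟨F, -, rfl⟩ := hX
  intro n m
  simpa [add_assoc] using hx (k + n) m

lemma IsSubshift.eventually_forall_cat_word_not_mem (hX : IsSubshift X) {y : ℕ → A}
    (hy : y ∉ X) : ∀ᶠ k in Filter.atTop, ∀ z, cat (word y k) z ∉ X := by
  obtain ⟨F, -, rfl⟩ := hX
  obtain ⟨n, m, hnm⟩ : ∃ n m, word (fun i => y (n + i)) m ∈ F := by simpa using hy
  filter_upwards [Filter.eventually_ge_atTop (n + m)] with k hk z hz
  refine hz n m ?_
  rwa [word_eq_word_iff.2 fun i hi => cat_word_apply_of_lt y z (by omega)]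

lemma mem_Cab_iff {a b : List A} {y : ℕ → A} :
    y ∈ Cab X a b ↔ y ∈ X ∧ word y b.length = b ∧ cat a (dropSeq b.length y) ∈ X := by
  constructor
  · rintro ⟨x, rfl, hb, ha⟩
    exact ⟨hb, word_cat b x, by rwa [dropSeq_cat]⟩
  · rintro ⟨hy, hb, ha⟩
    have hsplit : cat b (dropSeq b.length y) = y := by
      simpa only [hb] using cat_word_dropSeq y b.length
    exact ⟨dropSeq b.length y, hsplit.symm, by rwa [hsplit], ha⟩

lemma cat_word_mem_Cab_iff {a b : List A} {x z : ℕ → A} {k : ℕ} (hb : word x b.length = b)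
    (hk : b.length ≤ k) :
    cat (word x k) z ∈ Cab X a b ↔
      cat (word x k) z ∈ X ∧ cat (a ++ word (dropSeq b.length x) (k - b.length)) z ∈ X := by
  rw [mem_Cab_iff, word_cat_word_of_le x z hk, hb, dropSeq_cat_word x z hk, cat_append]
  simp only [true_and]

lemma IsSubshift.eventually_forall_cat_word_not_mem_Cab (hX : IsSubshift X) {a b : List A}
    {x : ℕ → A} (hx : x ∉ Cab X a b) : ∀ᶠ k in Filter.atTop, ∀ z, cat (word x k) z ∉ Cab X a b := by
  by_cases hxX : x ∈ X
  swap
  · filter_upwards [hX.eventually_forall_cat_word_not_mem hxX] with k hk z hz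
    exact hk z (mem_Cab_iff.1 hz).1
  by_cases hb : word x b.length = b
  swap
  · filter_upwards [Filter.eventually_ge_atTop b.length] with k hk z hz
    exact hb (word_cat_word_of_le x z hk ▸ (mem_Cab_iff.1 hz).2.1)
  have hax : cat a (dropSeq b.length x) ∉ X := fun h => hx (mem_Cab_iff.2 ⟨hxX, hb, h⟩)
  obtain ⟨N, hN⟩ := Filter.eventually_atTop.1 (hX.eventually_forall_cat_word_not_mem hax)
  filter_upwards [Filter.eventually_ge_atTop (b.length + N)] with k hk z hz
  rw [cat_word_mem_Cab_iff hb (by omega), ← word_cat_add] at hz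
  exact hN _ (by omega) z hz.2

end Subshift

section Cells

variable {X : Set (ℕ → A)}

def cabCell (X : Set (ℕ → A)) (I J : Finset (List A × List A)) : Set (ℕ → A) :=
  {y ∈ X | (∀ p ∈ I, y ∈ Cab X p.1 p.2) ∧ ∀ p ∈ J, y ∉ Cab X p.1 p.2}

lemma cabCell_union_union [DecidableEq A] (I₁ J₁ I₂ J₂ : Finset (List A × List A)) :
    cabCell X (I₁ ∪ I₂) (J₁ ∪ J₂) = cabCell X I₁ J₁ ∩ cabCell X I₂ J₂ := by
  ext y
  simp only [cabCell, Finset.mem_union, or_imp, forall_and, Set.mem_inter_iff,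
    Set.mem_ofPred_eq]
  tauto

def IsCellNhd (X : Set (ℕ → A)) (x : ℕ → A) (S : Set (ℕ → A)) : Prop :=
  x ∈ S → ∃ I J, x ∈ cabCell X I J ∧ cabCell X I J ⊆ S

lemma isCellNhd_self (x : ℕ → A) : IsCellNhd X x X :=
  fun hx => ⟨∅, ∅, ⟨hx, by simp, by simp⟩, fun _ hy => hy.1⟩

lemma isCellNhd_empty (x : ℕ → A) : IsCellNhd X x ∅ := fun hx => hx.elim

lemma isCellNhd_Cab (x : ℕ → A) (a b : List A) : IsCellNhd X x (Cab X a b) :=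
  fun hx => ⟨{(a, b)}, ∅, ⟨(mem_Cab_iff.1 hx).1, by simpa using hx, by simp⟩,
    fun _ hy => hy.2.1 (a, b) (Finset.mem_singleton_self _)⟩

lemma isCellNhd_sdiff_Cab (x : ℕ → A) (a b : List A) : IsCellNhd X x (X \ Cab X a b) :=
  fun hx => ⟨∅, {(a, b)}, ⟨hx.1, by simp, by simpa using hx.2⟩,
    fun _ hy => ⟨hy.1, hy.2.2 (a, b) (Finset.mem_singleton_self _)⟩⟩

lemma IsCellNhd.union {x : ℕ → A} {S T : Set (ℕ → A)} (hS : IsCellNhd X x S)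
    (hT : IsCellNhd X x T) : IsCellNhd X x (S ∪ T) := by
  rintro (hx | hx)
  · obtain ⟨I, J, hxIJ, hIJ⟩ := hS hx
    exact ⟨I, J, hxIJ, hIJ.trans Set.subset_union_left⟩
  · obtain ⟨I, J, hxIJ, hIJ⟩ := hT hx
    exact ⟨I, J, hxIJ, hIJ.trans Set.subset_union_right⟩

lemma IsCellNhd.inter {x : ℕ → A} {S T : Set (ℕ → A)} (hS : IsCellNhd X x S)
    (hT : IsCellNhd X x T) : IsCellNhd X x (S ∩ T) := by
  classical
  rintro ⟨hxS, hxT⟩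
  obtain ⟨I₁, J₁, hx₁, hS₁⟩ := hS hxS
  obtain ⟨I₂, J₂, hx₂, hT₂⟩ := hT hxT
  refine ⟨I₁ ∪ I₂, J₁ ∪ J₂, ?_, ?_⟩
  · rw [cabCell_union_union]
    exact ⟨hx₁, hx₂⟩
  · rw [cabCell_union_union]
    exact Set.inter_subset_inter hS₁ hT₂

/-- The sets `S` such that both `S` and `X \ S` are cell neighbourhoods of `x` form a family
closed under the operations defining `BA X`. -/
lemma exists_cabCell_subset_of_mem_BA {S : Set (ℕ → A)} (hS : S ∈ BA X) {x : ℕ → A}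
    (hx : x ∈ S) : ∃ I J, x ∈ cabCell X I J ∧ cabCell X I J ⊆ S := by
  suffices hS' : IsCellNhd X x S ∧ IsCellNhd X x (X \ S) from hS'.1 hx
  refine hS {T | IsCellNhd X x T ∧ IsCellNhd X x (X \ T)} ⟨?_, ?_, ?_, ?_, ?_⟩
  · exact ⟨isCellNhd_self x, Set.sdiff_self ▸ isCellNhd_empty x⟩
  · exact fun a _ b _ => ⟨isCellNhd_Cab x a b, isCellNhd_sdiff_Cab x a b⟩
  · rintro S ⟨hS, hS'⟩ T ⟨hT, hT'⟩
    exact ⟨hS.union hT, Set.sdiff_inter_sdiff ▸ hS'.inter hT'⟩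
  · rintro S ⟨hS, hS'⟩ T ⟨hT, hT'⟩
    exact ⟨hS.inter hT, Set.sdiff_inter ▸ hS'.union hT'⟩
  · rintro S ⟨hS, hS'⟩
    exact ⟨hS', (Set.sdiff_sdiff_right_self X S).symm ▸ (isCellNhd_self x).inter hS⟩

end Cells

section Followers

variable {X : Set (ℕ → A)}

lemma mem_language_of_mem_follower {δ : List A} {y : ℕ → A} (hy : y ∈ follower X δ) :
    δ ∈ language X :=
  ⟨cat δ y, hy.2, word_cat δ y⟩

lemma IsSubshift.follower_iInter_eq_singleton_dropSeq [DecidableEq A] (hX : IsSubshift X)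
    {x : ℕ → A} {I J : Finset (List A × List A)} (hx : x ∈ cabCell X I J)
    (hIJ : cabCell X I J ⊆ {x}) {k : ℕ} (hI : ∀ p ∈ I, p.2.length ≤ k)
    (hJ : ∀ p ∈ J, ∀ z, cat (word x k) z ∉ Cab X p.1 p.2) :
    (⋂ δ ∈ insert (word x k) (I.image fun p => p.1 ++ word (dropSeq p.2.length x) (k - p.2.length)),
      follower X δ) = {dropSeq k x} := by
  set Q := insert (word x k) (I.image fun p => p.1 ++ word (dropSeq p.2.length x) (k - p.2.length))
    with hQ
  have hmem : ∀ z, z ∈ (⋂ δ ∈ Q, follower X δ) ↔ z ∈ X ∧ cat (word x k) z ∈ cabCell X I J := by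
    intro z
    have hIz : ∀ p ∈ I, cat (word x k) z ∈ Cab X p.1 p.2 ↔ cat (word x k) z ∈ X ∧
        cat (p.1 ++ word (dropSeq p.2.length x) (k - p.2.length)) z ∈ X := fun p hp =>
      cat_word_mem_Cab_iff (mem_Cab_iff.1 (hx.2.1 p hp)).2.1 (hI p hp)
    simp only [hQ, Set.mem_iInter, Finset.mem_insert, Finset.mem_image, follower, cabCell,
      Set.mem_ofPred_eq]
    constructor
    · intro h
      have hy := (h _ (Or.inl rfl)).2
      exact ⟨(h _ (Or.inl rfl)).1, hy, fun p hp => (hIz p hp).2 ⟨hy, (h _ (Or.inr ⟨p, hp, rfl⟩)).2⟩,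
        fun p hp => hJ p hp z⟩
    · rintro ⟨hz, hy, hyI, -⟩ δ (rfl | ⟨p, hp, rfl⟩)
      · exact ⟨hz, hy⟩
      · exact ⟨hz, ((hIz p hp).1 (hyI p hp)).2⟩
  ext z
  rw [hmem, Set.mem_singleton_iff]
  constructor
  · rintro ⟨-, hy⟩
    have hz : dropSeq k (cat (word x k) z) = z := by
      simpa only [length_word] using dropSeq_cat (word x k) z
    rw [← hz, hIJ hy]
  · rintro rfl
    exact ⟨hX.dropSeq_mem hx.1 k, (cat_word_dropSeq x k).symm ▸ hx⟩

theorem IsSubshift.eventually_exists_follower_iInter_eq_singleton (hX : IsSubshift X)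
    {x : ℕ → A} (hU : {x} ∈ BA X) :
    ∀ᶠ k in Filter.atTop, ∃ Q : Finset (List A), Q.Nonempty ∧ ↑Q ⊆ language X ∧
      (⋂ δ ∈ Q, follower X δ) = {dropSeq k x} := by
  classical
  obtain ⟨I, J, hx, hIJ⟩ := exists_cabCell_subset_of_mem_BA hU rfl
  have hI : ∀ᶠ k in Filter.atTop, ∀ p ∈ I, p.2.length ≤ k :=
    (Filter.eventually_all_finset I).2 fun p _ => Filter.eventually_ge_atTop _
  have hJ : ∀ᶠ k in Filter.atTop, ∀ p ∈ J, ∀ z, cat (word x k) z ∉ Cab X p.1 p.2 :=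
    (Filter.eventually_all_finset J).2 fun p hp =>
      hX.eventually_forall_cat_word_not_mem_Cab (hx.2.2 p hp)
  filter_upwards [hI, hJ] with k hIk hJk
  have hQ := hX.follower_iInter_eq_singleton_dropSeq hx hIJ hIk hJk
  refine ⟨_, Finset.insert_nonempty _ _, fun δ hδ => ?_, hQ⟩
  have htail : dropSeq k x ∈ ⋂ δ ∈ _, follower X δ := hQ ▸ Set.mem_singleton _
  exact mem_language_of_mem_follower (Set.mem_iInter₂.1 htail δ hδ)

lemma not_conditionL_of_follower_iInter_eq_singleton {Q : Finset (List A)} (hQ : Q.Nonempty)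
    (hQX : ↑Q ⊆ language X) {γ : List A} {hγ : γ ≠ []}
    (hQγ : (⋂ δ ∈ Q, follower X δ) = {per γ hγ}) : ¬ ConditionL X := by
  intro hL
  have hper : per γ hγ ∈ ⋂ δ ∈ Q, follower X δ := hQγ ▸ Set.mem_singleton _
  obtain ⟨δ, hδ⟩ := hQ
  have hperX : per γ hγ ∈ X := (Set.mem_iInter₂.1 hper δ hδ).1
  obtain ⟨z, hz, hzγ⟩ := hL Q hQX γ ⟨_, hperX, word_per γ hγ⟩ hγ ⟨hperX, hper⟩
  exact hzγ (Set.mem_singleton_iff.1 (hQγ ▸ hz.2))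

end Followers

theorem stmt5_general {A : Type*} (X : Set (ℕ → A)) (hX : IsSubshift X)
    (α γ : List A) (hγ : γ ≠ [])
    (hU : {cat α (per γ hγ)} ∈ BA X) :
    (∃ Q : Finset (List A), Q.Nonempty ∧ ↑Q ⊆ language X ∧
      (⋂ δ ∈ Q, follower X δ) = {per γ hγ}) ∧ ¬ ConditionL X := by
  obtain ⟨N, hN⟩ := Filter.eventually_atTop.1 (hX.eventually_exists_follower_iInter_eq_singleton hU)
  have hk : N ≤ α.length + N * γ.length :=
    (Nat.le_mul_of_pos_right N (List.length_pos_of_ne_nil hγ)).trans (Nat.le_add_left _ _)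
  obtain ⟨Q, hQ, hQX, hQγ⟩ := hN _ hk
  rw [dropSeq_cat_per] at hQγ
  exact ⟨⟨Q, hQ, hQX, hQγ⟩, not_conditionL_of_follower_iInter_eq_singleton hQ hQX hQγ⟩

/-- if `x = αγ^∞ ∈ X` and `{x} ∈ U`, then there are finitely many (at least one)
words `γ₁, …, γ_n ∈ L_X` with `F_{γ₁} ∩ ⋯ ∩ F_{γ_n} = {γ^∞}`; in particular `X` does not
satisfy condition (L). -/
theorem stmt5 {A : Type*} (X : Set (ℕ → A)) (hX : IsSubshift X)
    (α γ : List A) (hγ : γ ≠ []) (hx : cat α (per γ hγ) ∈ X)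
    (hU : {cat α (per γ hγ)} ∈ BA X) :
    (∃ Q : Finset (List A), Q.Nonempty ∧ ↑Q ⊆ language X ∧
      (⋂ δ ∈ Q, follower X δ) = {per γ hγ}) ∧ ¬ ConditionL X :=
  stmt5_general X hX α γ hγ hU

end SubshiftPaper
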